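/- arXiv:2309.03803 — 3 statements merged into one kernel-verified Lean document; each statement's English description precedes it below -/
import Mathlib

section
/- Let I be a compact real interval and w : ℝ → ℂ integrable. Then the integral operator on L²(ℝ) with kernel χ_I(x) K_w(x,y) χ_I(y), where K_w(x,y) = ∫_ℝ e^{2πi(x-y)u} w(u) du, is a trace-class operator. -/
open MeasureTheory

/-- A continuous linear operator on a Hilbert space is Hilbert–Schmidt if the sum of
`‖T e i‖²` over some orthonormal Hilbert basis is finite. -/
def IsHilbertSchmidtOp {H : Type*} [NormedAddCommGroup H] [InnerProductSpace ℂ H]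
    (T : H →L[ℂ] H) : Prop :=
  ∃ b : HilbertBasis ℕ ℂ H, Summable fun i => ‖T (b i)‖ ^ 2

/-- A continuous linear operator is trace class if it is the composition of two
Hilbert–Schmidt operators. -/
def IsTraceClassOp {H : Type*} [NormedAddCommGroup H] [InnerProductSpace ℂ H]
    (T : H →L[ℂ] H) : Prop :=
  ∃ A B : H →L[ℂ] H, IsHilbertSchmidtOp A ∧ IsHilbertSchmidtOp B ∧ T = A.comp B

section Aux

open MeasureTheory Complex Set
open scoped ENNReal ComplexConjugate


noncomputable section

abbrev Hs : Type := Lp ℂ 2 (volume : Measure ℝ)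

theorem toLp_norm_sq {g : ℝ → ℂ} (hg : MemLp g 2 (volume : Measure ℝ)) :
    ‖hg.toLp g‖ ^ 2 = ∫ t, ‖g t‖ ^ 2 := by
  set F := hg.toLp g with hF
  have hFg : (F : ℝ → ℂ) =ᵐ[volume] g := hg.coeFn_toLp
  have h1 : (inner ℂ F F : ℂ) = ∫ t, (inner ℂ ((F : ℝ → ℂ) t) ((F : ℝ → ℂ) t) : ℂ) :=
    L2.inner_def F F
  have h2 : (inner ℂ F F : ℂ) = ((∫ t, ‖(F : ℝ → ℂ) t‖ ^ 2 : ℝ) : ℂ) := by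
    rw [h1]
    have : ∀ t : ℝ, (inner ℂ ((F : ℝ → ℂ) t) ((F : ℝ → ℂ) t) : ℂ) = ((‖(F : ℝ → ℂ) t‖ ^ 2 : ℝ) : ℂ) := by
      intro t
      rw [inner_self_eq_norm_sq_to_K]
      norm_cast
    simp only [this]
    exact integral_ofReal
  have h3 : ‖F‖ ^ 2 = ∫ t, ‖(F : ℝ → ℂ) t‖ ^ 2 := by
    have := norm_sq_eq_re_inner (𝕜 := ℂ) F
    rw [this, h2]
    simp
  rw [h3]
  refine integral_congr_ae ?_
  filter_upwards [hFg] with t ht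
  rw [ht]

end

noncomputable section
open scoped ComplexConjugate

theorem carleman_exists (bas : HilbertBasis ℕ ℂ Hs) (k : ℝ → Hs)
    (hm : ∀ f : Hs, AEStronglyMeasurable (fun t => (inner ℂ (k t) f : ℂ)) volume)
    (hk : Integrable (fun t => ‖k t‖ ^ 2) volume) :
    ∃ S : Hs →L[ℂ] Hs,
      (∀ f : Hs, (S f : ℝ → ℂ) =ᵐ[volume] fun t => (inner ℂ (k t) f : ℂ)) ∧
      (∃ b : HilbertBasis ℕ ℂ Hs, Summable fun i => ‖S (b i)‖ ^ 2) := by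
  have memS : ∀ f : Hs, MemLp (fun t => (inner ℂ (k t) f : ℂ)) 2 volume := by
    intro f
    rw [memLp_two_iff_integrable_sq_norm (hm f)]
    refine (hk.const_mul (‖f‖ ^ 2)).mono' (((hm f).norm).pow 2) ?_
    filter_upwards with t
    rw [Real.norm_eq_abs, _root_.abs_of_nonneg (by positivity)]
    have h1 := norm_inner_le_norm (𝕜 := ℂ) (k t) f
    nlinarith [norm_nonneg (k t), norm_nonneg f, norm_nonneg (inner ℂ (k t) f : ℂ)]
  set S₀ : Hs →ₗ[ℂ] Hs :=
    { toFun := fun f => (memS f).toLp _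
      map_add' := fun f g => by
        rw [← MemLp.toLp_add (memS f) (memS g)]
        exact MemLp.toLp_congr _ _ (Filter.Eventually.of_forall fun t => inner_add_right _ _ _)
      map_smul' := fun c f => by
        simp only [RingHom.id_apply]
        rw [← MemLp.toLp_const_smul c (memS f)]
        exact MemLp.toLp_congr _ _
          (Filter.Eventually.of_forall fun t => by simp [inner_smul_right]) } with hS₀
  have hS₀app : ∀ f, S₀ f = (memS f).toLp _ := fun f => rfl
  have hint : ∀ f : Hs, Integrable (fun t => ‖(inner ℂ (k t) f : ℂ)‖ ^ 2) volume := fun f =>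
    (memLp_two_iff_integrable_sq_norm (hm f)).1 (memS f)
  have hnormsq : ∀ f : Hs, ‖S₀ f‖ ^ 2 = ∫ t, ‖(inner ℂ (k t) f : ℂ)‖ ^ 2 := fun f =>
    toLp_norm_sq (memS f)
  have hC0 : (0:ℝ) ≤ ∫ t, ‖k t‖ ^ 2 := integral_nonneg fun t => by positivity
  set C : ℝ := Real.sqrt (∫ t, ‖k t‖ ^ 2) with hC
  have hbound : ∀ f, ‖S₀ f‖ ≤ C * ‖f‖ := by
    intro f
    have h2 : ∫ t, ‖(inner ℂ (k t) f : ℂ)‖ ^ 2 ≤ ∫ t, ‖f‖ ^ 2 * ‖k t‖ ^ 2 := by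
      refine integral_mono (hint f) (hk.const_mul _) fun t => ?_
      have h1 := norm_inner_le_norm (𝕜 := ℂ) (k t) f
      nlinarith [norm_nonneg (k t), norm_nonneg f, norm_nonneg (inner ℂ (k t) f : ℂ)]
    have h3 : ‖S₀ f‖ ^ 2 ≤ (C * ‖f‖) ^ 2 := by
      rw [hnormsq f]
      calc ∫ t, ‖(inner ℂ (k t) f : ℂ)‖ ^ 2 ≤ ∫ t, ‖f‖ ^ 2 * ‖k t‖ ^ 2 := h2
        _ = ‖f‖ ^ 2 * ∫ t, ‖k t‖ ^ 2 := integral_const_mul _ _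
        _ = (C * ‖f‖) ^ 2 := by rw [mul_pow, hC, Real.sq_sqrt hC0]; ring
    have hCf : (0:ℝ) ≤ C * ‖f‖ := mul_nonneg (Real.sqrt_nonneg _) (norm_nonneg _)
    nlinarith [norm_nonneg (S₀ f)]
  set S : Hs →L[ℂ] Hs := S₀.mkContinuous C hbound with hS
  have hSapp : ∀ f, S f = S₀ f := fun f => rfl
  refine ⟨S, fun f => ?_, ⟨bas, ?_⟩⟩
  · rw [hSapp, hS₀app]
    exact MemLp.coeFn_toLp _
  · have parseval : ∀ t : ℝ, HasSum (fun i => ‖(inner ℂ (k t) (bas i) : ℂ)‖ ^ 2) (‖k t‖ ^ 2) := by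
      intro t
      have h := bas.hasSum_inner_mul_inner (k t) (k t)
      have e1 : ∀ i, (inner ℂ (k t) (bas i) : ℂ) * (inner ℂ (bas i) (k t) : ℂ)
          = ((‖(inner ℂ (k t) (bas i) : ℂ)‖ ^ 2 : ℝ) : ℂ) := by
        intro i
        rw [← inner_conj_symm (bas i) (k t), Complex.mul_conj]
        norm_cast
        rw [Complex.normSq_eq_norm_sq]
      have e2 : (inner ℂ (k t) (k t) : ℂ) = ((‖k t‖ ^ 2 : ℝ) : ℂ) := by
        rw [inner_self_eq_norm_sq_to_K]; norm_cast
      rw [e2] at h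
      simp_rw [e1] at h
      have h' := h.mapL Complex.reCLM
      simp only [Complex.reCLM_apply, Complex.ofReal_re] at h'
      exact h'
    refine summable_of_sum_le (c := ∫ t, ‖k t‖ ^ 2) (fun i => by positivity) fun u => ?_
    have step1 : ∑ i ∈ u, ‖S (bas i)‖ ^ 2
        = ∫ t, ∑ i ∈ u, ‖(inner ℂ (k t) (bas i) : ℂ)‖ ^ 2 := by
      rw [integral_finset_sum u (fun i _ => hint _)]
      exact Finset.sum_congr rfl fun i _ => by rw [hSapp, hnormsq]
    rw [step1]
    refine integral_mono (integrable_finset_sum u fun i _ => hint _) hk fun t => ?_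
    exact sum_le_hasSum u (fun i _ => by positivity) (parseval t)

end

theorem hs_chi_orthonormal :
    ∃ v : ℕ → Hs, Orthonormal ℂ v := by
  have hmeas : ∀ n : ℕ, MeasurableSet (Set.Ioc (n : ℝ) (n + 1)) := fun n => measurableSet_Ioc
  have hvol : ∀ n : ℕ, volume (Set.Ioc (n : ℝ) (n + 1)) = 1 := by
    intro n; rw [Real.volume_Ioc]; norm_num
  have hne : ∀ n : ℕ, volume (Set.Ioc (n : ℝ) (n + 1)) ≠ ∞ := fun n => by
    rw [hvol n]; exact ENNReal.one_ne_top
  refine ⟨fun n => indicatorConstLp 2 (hmeas n) (hne n) (1 : ℂ), ?_⟩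
  rw [orthonormal_iff_ite]
  intro i j
  rw [L2.inner_indicatorConstLp_eq_setIntegral_inner ℂ _ (hmeas i) (1 : ℂ) (hne i)]
  have hcoe : (fun x => (inner ℂ (1 : ℂ) ((indicatorConstLp 2 (hmeas j) (hne j) (1:ℂ) : Hs) x) : ℂ))
      =ᵐ[volume.restrict (Set.Ioc (i : ℝ) (i+1))]
      fun x => (Set.Ioc (j : ℝ) (j+1)).indicator (fun _ => (1:ℂ)) x := by
    refine ae_restrict_of_ae ?_
    filter_upwards [indicatorConstLp_coeFn (p := 2) (hs := hmeas j) (hμs := hne j) (c := (1:ℂ))]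
      with x hx
    rw [RCLike.inner_apply, hx]
    simp
  rw [integral_congr_ae hcoe, setIntegral_indicator (hmeas j)]
  by_cases hij : i = j
  · subst hij
    simp only [Set.inter_self, if_pos rfl]
    rw [setIntegral_const]
    rw [measureReal_def, hvol i]
    simp
  · have hdisj : Set.Ioc (i : ℝ) (i+1) ∩ Set.Ioc (j : ℝ) (j+1) = ∅ := by
      apply Set.eq_empty_of_forall_notMem
      rintro x ⟨⟨h1, h2⟩, ⟨h3, h4⟩⟩
      rcases Nat.lt_or_ge i j with h | h
      · have : (i : ℝ) + 1 ≤ (j : ℝ) := by exact_mod_cast Nat.succ_le_of_lt h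
        linarith
      · have hj : j < i := lt_of_le_of_ne h (Ne.symm hij)
        have : (j : ℝ) + 1 ≤ (i : ℝ) := by exact_mod_cast Nat.succ_le_of_lt hj
        linarith
    rw [hdisj, if_neg hij]
    simp

theorem hs_hilbertBasis : Nonempty (HilbertBasis ℕ ℂ Hs) := by
  haveI : Fact ((2:ℝ≥0∞) ≠ ∞) := ⟨by norm_num⟩
  obtain ⟨s, b, hb⟩ := exists_hilbertBasis ℂ Hs
  have horth : Orthonormal ℂ ((↑) : s → Hs) := hb ▸ b.orthonormal
  have hcount : s.Countable := by
    have hd : s.PairwiseDisjoint (fun x => Metric.ball x (1/2 : ℝ)) := by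
      intro x hx y hy hxy
      have hne : (⟨x, hx⟩ : s) ≠ ⟨y, hy⟩ := fun h => hxy (congrArg Subtype.val h)
      have hinner : (inner ℂ (x : Hs) (y : Hs) : ℂ) = 0 := horth.2 hne
      have hx1 : ‖(x : Hs)‖ = 1 := horth.1 ⟨x, hx⟩
      have hy1 : ‖(y : Hs)‖ = 1 := horth.1 ⟨y, hy⟩
      have hsq : ‖x - y‖ ^ 2 = 2 := by
        rw [norm_sub_sq (𝕜 := ℂ), hinner, hx1, hy1]
        norm_num
      refine Metric.ball_disjoint_ball ?_
      rw [dist_eq_norm]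
      nlinarith [norm_nonneg (x - y)]
    exact hd.countable_of_isOpen (fun x _ => Metric.isOpen_ball)
      (fun x _ => Metric.nonempty_ball.2 (by norm_num))
  have hinf : s.Infinite := by
    by_contra hfin
    rw [Set.not_infinite] at hfin
    haveI := hfin.fintype
    haveI : FiniteDimensional ℂ Hs :=
      Module.Finite.of_basis (b.toOrthonormalBasis.toBasis)
    obtain ⟨v, hv⟩ := hs_chi_orthonormal
    haveI : IsNoetherian ℂ Hs := IsNoetherian.iff_fg.2 inferInstance
    exact @not_finite ℕ _ (hv.linearIndependent.finite_of_isNoetherian)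
  haveI : Countable ↥s := hcount.to_subtype
  haveI : Infinite ↥s := hinf.to_subtype
  obtain ⟨e⟩ : Nonempty (ℕ ≃ ↥s) := nonempty_equiv_of_countable
  have horth2 : Orthonormal ℂ (fun n => b (e n)) := b.orthonormal.comp e e.injective
  refine ⟨HilbertBasis.mk horth2 ?_⟩
  have hrange : Set.range (fun n => b (e n)) = Set.range b := by
    have h1 : (fun n => b (e n)) = ⇑b ∘ ⇑e := rfl
    rw [h1, Set.range_comp, Equiv.range_eq_univ, Set.image_univ]
  rw [hrange, b.dense_span]

noncomputable section

theorem deformed_sine_kernel_traceClass' (a b : ℝ) (w : ℝ → ℂ) (hw : Integrable w) :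
    ∃ T : Lp ℂ 2 (volume : Measure ℝ) →L[ℂ] Lp ℂ 2 (volume : Measure ℝ),
      (∀ f : Lp ℂ 2 (volume : Measure ℝ),
        (T f : ℝ → ℂ) =ᵐ[volume] fun x =>
          Set.indicator (Set.Icc a b)
            (fun x' => ∫ y in Set.Icc a b,
              (∫ u : ℝ, Complex.exp (2 * (Real.pi : ℂ) * Complex.I * ((x' : ℂ) - (y : ℂ)) * (u : ℂ)) * w u)
                * f y) x) ∧
      (∃ A B : Hs →L[ℂ] Hs, (∃ b : HilbertBasis ℕ ℂ Hs, Summable fun i => ‖A (b i)‖ ^ 2) ∧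
        (∃ b : HilbertBasis ℕ ℂ Hs, Summable fun i => ‖B (b i)‖ ^ 2) ∧ T = A.comp B) := by
  classical
  haveI : Fact ((2:ℝ≥0∞) ≠ ∞) := ⟨by norm_num⟩
  obtain ⟨bas⟩ := hs_hilbertBasis
  set Ic : Set ℝ := Set.Icc a b with hIc
  have hImeas : MeasurableSet Ic := measurableSet_Icc
  have hIfin : volume Ic < ∞ := measure_Icc_lt_top
  haveI : IsFiniteMeasure (volume.restrict Ic) :=
    ⟨by rw [Measure.restrict_apply_univ]; exact hIfin⟩
  set c : ℝ → ℝ := fun u => Real.sqrt ‖w u‖ with hc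
  set sf : ℝ → ℂ := fun u => w u / (c u : ℂ) with hsf
  have hexp1 : ∀ z : ℂ, z.re = 0 → ‖Complex.exp z‖ = 1 := fun z hz => by
    rw [Complex.norm_exp, hz, Real.exp_zero]
  have hsc : ∀ u, sf u * (c u : ℂ) = w u := by
    intro u
    by_cases h : w u = 0
    · simp [hsf, h]
    · have hcne : (c u : ℂ) ≠ 0 := by
        simp only [hc, Complex.ofReal_ne_zero]
        exact (Real.sqrt_pos.2 (norm_pos_iff.2 h)).ne'
      simp only [hsf]
      exact div_mul_cancel₀ _ hcne
  have hnorm_s : ∀ u, ‖sf u‖ ^ 2 = ‖w u‖ := by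
    intro u
    by_cases h : w u = 0
    · simp [hsf, h]
    · have hpos : 0 < ‖w u‖ := norm_pos_iff.2 h
      have hcval : ‖((c u : ℝ) : ℂ)‖ = Real.sqrt ‖w u‖ := by
        rw [Complex.norm_real, Real.norm_eq_abs, _root_.abs_of_nonneg (Real.sqrt_nonneg _)]
      rw [hsf]
      simp only [norm_div, hcval]
      rw [div_pow, Real.sq_sqrt hpos.le, sq, mul_div_assoc, div_self hpos.ne', mul_one]
  have hw_meas := hw.aestronglyMeasurable
  have hc_meas : AEStronglyMeasurable (fun u => ((c u : ℝ) : ℂ)) volume :=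
    (Complex.continuous_ofReal.comp Real.continuous_sqrt).comp_aestronglyMeasurable hw_meas.norm
  have hs_meas : AEStronglyMeasurable sf volume := by
    have h0 : AEMeasurable (fun u => ((c u)⁻¹ : ℝ)) volume :=
      (Real.continuous_sqrt.measurable.comp_aemeasurable hw.aemeasurable.norm).inv
    have h1 : AEStronglyMeasurable (fun u => (((c u)⁻¹ : ℝ) : ℂ)) volume :=
      (Complex.measurable_ofReal.comp_aemeasurable h0).aestronglyMeasurable
    refine (hw_meas.mul h1).congr (Filter.Eventually.of_forall fun u => ?_)
    show w u * (((c u)⁻¹ : ℝ) : ℂ) = sf u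
    simp only [hsf, Complex.ofReal_inv]
    rw [div_eq_mul_inv]
  have hs_mem : MemLp sf 2 volume := by
    rw [memLp_two_iff_integrable_sq_norm hs_meas]
    exact hw.norm.congr (Filter.Eventually.of_forall fun u => (hnorm_s u).symm)
  -- base functions for B
  have memB0 : ∀ u : ℝ, MemLp
      (fun y : ℝ => Ic.indicator (fun y : ℝ =>
        Complex.exp (2 * (Real.pi:ℂ) * Complex.I * y * u)) y) 2 volume := by
    intro u
    have hcont : Continuous fun y : ℝ => Complex.exp (2 * (Real.pi:ℂ) * Complex.I * y * u) := by
      fun_prop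
    have hmeas : AEStronglyMeasurable
        (fun y : ℝ => Ic.indicator (fun y : ℝ =>
          Complex.exp (2 * (Real.pi:ℂ) * Complex.I * y * u)) y) volume :=
      (hcont.aestronglyMeasurable).indicator hImeas
    rw [memLp_two_iff_integrable_sq_norm hmeas]
    have heq : (fun y : ℝ => ‖Ic.indicator (fun y : ℝ =>
        Complex.exp (2 * (Real.pi:ℂ) * Complex.I * y * u)) y‖ ^ 2)
        = Ic.indicator (fun _ => (1:ℝ)) := by
      funext y
      by_cases hy : y ∈ Ic
      · rw [Set.indicator_of_mem hy, Set.indicator_of_mem hy, hexp1 _ (by simp)]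
        norm_num
      · rw [Set.indicator_of_notMem hy, Set.indicator_of_notMem hy]
        simp
    rw [heq]
    rw [integrable_indicator_iff hImeas]
    exact integrableOn_const hIfin.ne
  set kB : ℝ → Hs := fun u => ((c u : ℝ) : ℂ) • (memB0 u).toLp _ with hkB
  -- base functions for A
  have memA0 : ∀ x : ℝ, MemLp
      (fun u : ℝ => Complex.exp (-(2 * (Real.pi:ℂ) * Complex.I * x * u)) * conj (sf u))
      2 volume := by
    intro x
    have hcont : Continuous fun u : ℝ => Complex.exp (-(2 * (Real.pi:ℂ) * Complex.I * x * u)) := by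
      fun_prop
    have hmeas : AEStronglyMeasurable
        (fun u : ℝ => Complex.exp (-(2 * (Real.pi:ℂ) * Complex.I * x * u)) * conj (sf u))
        volume := hcont.aestronglyMeasurable.mul ((RCLike.continuous_conj (K := ℂ)).comp_aestronglyMeasurable hs_meas)
    rw [memLp_two_iff_integrable_sq_norm hmeas]
    refine (hw.norm.congr (Filter.Eventually.of_forall fun u => ?_))
    have h1 : ‖Complex.exp (-(2 * (Real.pi:ℂ) * Complex.I * x * u))‖ = 1 := hexp1 _ (by simp)
    show ‖w u‖ = ‖Complex.exp (-(2 * (Real.pi:ℂ) * Complex.I * x * u)) * conj (sf u)‖ ^ 2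
    rw [norm_mul, h1, one_mul, RCLike.norm_conj, hnorm_s u]

  set kA : ℝ → Hs := fun x => (Ic.indicator (fun _ => (1:ℂ)) x) • (memA0 x).toLp _ with hkA
  -- conjugation helpers
  have hconj_exp : ∀ (x u : ℝ), conj (Complex.exp (2 * (Real.pi:ℂ) * Complex.I * x * u))
      = Complex.exp (-(2 * (Real.pi:ℂ) * Complex.I * x * u)) := by
    intro x u
    rw [← Complex.exp_conj]
    congr 1
    simp only [map_mul, map_ofNat, Complex.conj_ofReal, Complex.conj_I]
    ring
  have hconj_exp' : ∀ (x u : ℝ), conj (Complex.exp (-(2 * (Real.pi:ℂ) * Complex.I * x * u)))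
      = Complex.exp (2 * (Real.pi:ℂ) * Complex.I * x * u) := by
    intro x u
    rw [← Complex.exp_conj]
    congr 1
    simp only [map_neg, map_mul, map_ofNat, Complex.conj_ofReal, Complex.conj_I]
    ring
  -- norms of kB
  have hB0norm : ∀ u : ℝ, ‖(memB0 u).toLp _‖ ^ 2 = (volume Ic).toReal := by
    intro u
    rw [toLp_norm_sq (memB0 u)]
    have heq : (fun y : ℝ => ‖Ic.indicator (fun y : ℝ =>
        Complex.exp (2 * (Real.pi:ℂ) * Complex.I * y * u)) y‖ ^ 2)
        = Ic.indicator (fun _ => (1:ℝ)) := by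
      funext y
      by_cases hy : y ∈ Ic
      · rw [Set.indicator_of_mem hy, Set.indicator_of_mem hy, hexp1 _ (by simp)]
        norm_num
      · rw [Set.indicator_of_notMem hy, Set.indicator_of_notMem hy]
        simp
    rw [heq, integral_indicator_const (1:ℝ) hImeas]
    simp [measureReal_def]
  have hkBnorm : ∀ u, ‖kB u‖ ^ 2 = ‖w u‖ * (volume Ic).toReal := by
    intro u
    show ‖((c u : ℝ) : ℂ) • (memB0 u).toLp _‖ ^ 2 = _
    rw [norm_smul, mul_pow, hB0norm u]
    congr 1
    rw [Complex.norm_real, Real.norm_eq_abs, _root_.abs_of_nonneg (Real.sqrt_nonneg _),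
      Real.sq_sqrt (norm_nonneg _)]
  have hkB_int : Integrable (fun u => ‖kB u‖ ^ 2) volume :=
    (hw.norm.mul_const ((volume Ic).toReal)).congr
      (Filter.Eventually.of_forall fun u => (hkBnorm u).symm)
  -- inner ℂ products with kB
  have hB0coe : ∀ u : ℝ, (((memB0 u).toLp _ : Hs) : ℝ → ℂ) =ᵐ[volume]
      fun y => Ic.indicator (fun y : ℝ =>
        Complex.exp (2 * (Real.pi:ℂ) * Complex.I * y * u)) y := fun u => MemLp.coeFn_toLp _
  have hBinner : ∀ (u : ℝ) (f : Hs), (inner ℂ (kB u) f : ℂ)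
      = ((c u : ℝ) : ℂ) * ∫ y in Ic,
          Complex.exp (-(2 * (Real.pi:ℂ) * Complex.I * y * u)) * f y := by
    intro u f
    have h1 : (inner ℂ (kB u) f : ℂ)
        = conj ((c u : ℝ) : ℂ) * inner ℂ ((memB0 u).toLp _) f := inner_smul_left _ _ _
    rw [h1, Complex.conj_ofReal]
    congr 1
    rw [L2.inner_def]
    have h2 : (fun y => (inner ℂ ((((memB0 u).toLp _ : Hs) : ℝ → ℂ) y) ((f : ℝ → ℂ) y) : ℂ))
        =ᵐ[volume] fun y => Ic.indicator
          (fun y => Complex.exp (-(2 * (Real.pi:ℂ) * Complex.I * y * u)) * f y) y := by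
      filter_upwards [hB0coe u] with y hy
      rw [RCLike.inner_apply, hy]
      by_cases hyI : y ∈ Ic
      · rw [Set.indicator_of_mem hyI, Set.indicator_of_mem hyI, hconj_exp y u, mul_comm]
      · rw [Set.indicator_of_notMem hyI, Set.indicator_of_notMem hyI]
        simp
    rw [integral_congr_ae h2, integral_indicator hImeas]
  -- norms of kA
  have hA0norm : ∀ x : ℝ, ‖(memA0 x).toLp _‖ ^ 2 = ∫ u : ℝ, ‖w u‖ := by
    intro x
    rw [toLp_norm_sq (memA0 x)]
    refine integral_congr_ae (Filter.Eventually.of_forall fun u => ?_)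
    show ‖Complex.exp (-(2 * (Real.pi:ℂ) * Complex.I * x * u)) * conj (sf u)‖ ^ 2 = ‖w u‖
    rw [norm_mul, hexp1 _ (by simp), one_mul, RCLike.norm_conj, hnorm_s u]
  have hkAnorm : ∀ x, ‖kA x‖ ^ 2 = Ic.indicator (fun _ => ∫ u : ℝ, ‖w u‖) x := by
    intro x
    show ‖(Ic.indicator (fun _ => (1:ℂ)) x) • (memA0 x).toLp _‖ ^ 2 = _
    rw [norm_smul, mul_pow, hA0norm x]
    by_cases hx : x ∈ Ic <;> simp [hx]
  have hkA_int : Integrable (fun x => ‖kA x‖ ^ 2) volume := by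
    refine Integrable.congr ((integrable_indicator_iff hImeas).2 ?_)
      (Filter.Eventually.of_forall fun x => (hkAnorm x).symm)
    exact integrableOn_const hIfin.ne
  -- inner ℂ products with kA
  have hA0coe : ∀ x : ℝ, (((memA0 x).toLp _ : Hs) : ℝ → ℂ) =ᵐ[volume]
      fun u => Complex.exp (-(2 * (Real.pi:ℂ) * Complex.I * x * u)) * conj (sf u) :=
    fun x => MemLp.coeFn_toLp _
  have hAinner : ∀ (x : ℝ) (g : Hs), (inner ℂ (kA x) g : ℂ)
      = Ic.indicator (fun _ => (1:ℂ)) x *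
          ∫ u : ℝ, Complex.exp (2 * (Real.pi:ℂ) * Complex.I * x * u) * (sf u * g u) := by
    intro x g
    have h1 : (inner ℂ (kA x) g : ℂ)
        = conj (Ic.indicator (fun _ => (1:ℂ)) x) * inner ℂ ((memA0 x).toLp _) g :=
      inner_smul_left _ _ _
    have hconjind : conj (Ic.indicator (fun _ => (1:ℂ)) x) = Ic.indicator (fun _ => (1:ℂ)) x := by
      by_cases hx : x ∈ Ic <;> simp [hx]
    rw [h1, hconjind]
    congr 1
    rw [L2.inner_def]
    refine integral_congr_ae ?_
    filter_upwards [hA0coe x] with u hu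
    rw [RCLike.inner_apply, hu, map_mul, RCLike.conj_conj, hconj_exp' x u]
    ring
  -- measurability for kB
  have hmB : ∀ f : Hs, AEStronglyMeasurable (fun u => (inner ℂ (kB u) f : ℂ)) volume := by
    intro f
    have hfI : Integrable (fun y => (f : ℝ → ℂ) y) (volume.restrict Ic) :=
      ((Lp.memLp f).restrict Ic).integrable one_le_two
    have hcont : Continuous fun u : ℝ => ∫ y in Ic,
        Complex.exp (-(2 * (Real.pi:ℂ) * Complex.I * y * u)) * f y := by
      refine continuous_of_dominated (fun u => ?_) (fun u => ?_) hfI.norm ?_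
      · exact (Continuous.aestronglyMeasurable (by fun_prop)).mul
          (Lp.aestronglyMeasurable f).restrict
      · filter_upwards with y
        rw [norm_mul, hexp1 _ (by simp), one_mul]
      · filter_upwards with y
        fun_prop
    refine AEStronglyMeasurable.congr (hc_meas.mul hcont.aestronglyMeasurable) ?_
    exact Filter.Eventually.of_forall fun u => (hBinner u f).symm
  -- measurability for kA
  have hmA : ∀ g : Hs, AEStronglyMeasurable (fun x => (inner ℂ (kA x) g : ℂ)) volume := by
    intro g
    have hbound : Integrable (fun u => ‖sf u‖ * ‖(g : ℝ → ℂ) u‖) volume := by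
      have h1 := (L2.integrable_inner (𝕜 := ℂ) (hs_mem.toLp sf) g).norm
      refine h1.congr ?_
      filter_upwards [MemLp.coeFn_toLp hs_mem] with u hu
      rw [RCLike.inner_apply, norm_mul, RCLike.norm_conj, hu, mul_comm]
    have hcont : Continuous fun x : ℝ => ∫ u : ℝ,
        Complex.exp (2 * (Real.pi:ℂ) * Complex.I * x * u) * (sf u * g u) := by
      refine continuous_of_dominated (fun x => ?_) (fun x => ?_) hbound ?_
      · exact (Continuous.aestronglyMeasurable (by fun_prop)).mul
          (hs_meas.mul (Lp.aestronglyMeasurable g))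
      · filter_upwards with u
        rw [norm_mul, hexp1 _ (by simp), one_mul, norm_mul]
      · filter_upwards with u
        fun_prop
    have h2 : (fun x => Ic.indicator (fun _ => (1:ℂ)) x *
          ∫ u : ℝ, Complex.exp (2 * (Real.pi:ℂ) * Complex.I * x * u) * (sf u * g u))
        = Ic.indicator (fun x => ∫ u : ℝ,
            Complex.exp (2 * (Real.pi:ℂ) * Complex.I * x * u) * (sf u * g u)) := by
      funext x
      by_cases hx : x ∈ Ic <;> simp [hx]
    refine AEStronglyMeasurable.congr ?_
      (Filter.Eventually.of_forall fun x => (hAinner x g).symm)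
    rw [h2]
    exact hcont.aestronglyMeasurable.indicator hImeas
  -- construct the two Hilbert--Schmidt operators
  obtain ⟨B, hBf, hBHS⟩ := carleman_exists bas kB hmB hkB_int
  obtain ⟨A, hAf, hAHS⟩ := carleman_exists bas kA hmA hkA_int
  refine ⟨A.comp B, ?_, A, B, hAHS, hBHS, rfl⟩
  intro f
  have hfI : Integrable (fun y => (f : ℝ → ℂ) y) (volume.restrict Ic) :=
    ((Lp.memLp f).restrict Ic).integrable one_le_two
  have key : ∀ x : ℝ, (inner ℂ (kA x) (B f) : ℂ)
      = Set.indicator Ic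
          (fun x' => ∫ y in Ic,
            (∫ u : ℝ, Complex.exp (2 * (Real.pi : ℂ) * Complex.I * ((x' : ℂ) - (y : ℂ)) * (u : ℂ)) * w u)
              * f y) x := by
    intro x
    rw [hAinner x (B f)]
    by_cases hxI : x ∈ Ic
    swap
    · rw [Set.indicator_of_notMem hxI, Set.indicator_of_notMem hxI, zero_mul]
    rw [Set.indicator_of_mem hxI, Set.indicator_of_mem hxI, one_mul]
    have e1 : (fun u : ℝ => Complex.exp (2 * (Real.pi:ℂ) * Complex.I * x * u) * (sf u * (B f) u))
        =ᵐ[volume] fun u : ℝ => ∫ y in Ic,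
          w u * Complex.exp (2 * (Real.pi:ℂ) * Complex.I * x * u) *
            (Complex.exp (-(2 * (Real.pi:ℂ) * Complex.I * y * u)) * f y) := by
      filter_upwards [hBf f] with u hu
      rw [hu, hBinner u f, MeasureTheory.integral_const_mul, ← hsc u]
      ring
    rw [integral_congr_ae e1]
    have hGint : Integrable (Function.uncurry fun (u : ℝ) (y : ℝ) =>
        w u * Complex.exp (2 * (Real.pi:ℂ) * Complex.I * x * u) *
          (Complex.exp (-(2 * (Real.pi:ℂ) * Complex.I * y * u)) * f y))
        ((volume : Measure ℝ).prod (volume.restrict Ic)) := by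
      have hmaj : Integrable (fun z : ℝ × ℝ => ‖w z.1‖ * ‖(f : ℝ → ℂ) z.2‖)
          ((volume : Measure ℝ).prod (volume.restrict Ic)) := hw.norm.mul_prod hfI.norm
      refine hmaj.mono' ?_ ?_
      · refine AEStronglyMeasurable.mul ?_ ?_
        · exact hw_meas.comp_fst.mul (Continuous.aestronglyMeasurable (by fun_prop))
        · exact (Continuous.aestronglyMeasurable
            (by fun_prop : Continuous fun z : ℝ × ℝ =>
              Complex.exp (-(2 * (Real.pi:ℂ) * Complex.I * z.2 * z.1)))).mul
            ((Lp.aestronglyMeasurable f).restrict.comp_snd)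
      · filter_upwards with z
        show ‖w z.1 * Complex.exp (2 * (Real.pi:ℂ) * Complex.I * x * z.1) *
          (Complex.exp (-(2 * (Real.pi:ℂ) * Complex.I * z.2 * z.1)) * f z.2)‖ ≤ _
        rw [norm_mul, norm_mul, norm_mul, hexp1 _ (by simp), hexp1 _ (by simp),
          mul_one, one_mul]
    rw [MeasureTheory.integral_integral_swap hGint]
    refine integral_congr_ae (Filter.Eventually.of_forall fun y => ?_)
    have e2 : ∀ u : ℝ,
        w u * Complex.exp (2 * (Real.pi:ℂ) * Complex.I * x * u) *
          (Complex.exp (-(2 * (Real.pi:ℂ) * Complex.I * y * u)) * (f : ℝ → ℂ) y)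
        = (Complex.exp (2 * (Real.pi : ℂ) * Complex.I * ((x : ℂ) - (y : ℂ)) * u) * w u)
            * (f : ℝ → ℂ) y := by
      intro u
      rw [show (2 * (Real.pi : ℂ) * Complex.I * ((x : ℂ) - (y : ℂ)) * u : ℂ)
          = (2 * (Real.pi:ℂ) * Complex.I * x * u) + (-(2 * (Real.pi:ℂ) * Complex.I * y * u)) by
        ring, Complex.exp_add]
      ring
    simp_rw [e2]
    rw [MeasureTheory.integral_mul_const]
  filter_upwards [hAf (B f)] with x hx
  exact hx.trans (key x)


end

end Aux

/-- For a compact interval `I = [a,b]` and integrable `w : ℝ → ℂ`, the integral operator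
on `L²(ℝ)` with kernel `χ_I(x) K_w(x,y) χ_I(y)`, where
`K_w(x,y) = ∫_ℝ e^{2πi(x-y)u} w(u) du`, is trace class. -/
theorem deformed_sine_kernel_traceClass (a b : ℝ) (w : ℝ → ℂ) (hw : Integrable w) :
    ∃ T : Lp ℂ 2 (volume : Measure ℝ) →L[ℂ] Lp ℂ 2 (volume : Measure ℝ),
      (∀ f : Lp ℂ 2 (volume : Measure ℝ),
        (T f : ℝ → ℂ) =ᵐ[volume] fun x =>
          Set.indicator (Set.Icc a b)
            (fun x' => ∫ y in Set.Icc a b,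
              (∫ u : ℝ, Complex.exp (2 * (Real.pi : ℂ) * Complex.I * ((x' : ℂ) - (y : ℂ)) * (u : ℂ)) * w u)
                * f y) x) ∧
      IsTraceClassOp T := by
  obtain ⟨T, h1, A, B, hA, hB, hT⟩ := deformed_sine_kernel_traceClass' a b w hw
  exact ⟨T, h1, A, B, hA, hB, hT⟩
end

section
/- For integrable w : ℝ → ℂ and s > 0, the Fredholm determinant identity det(1 - χ_J K_w χ_J) = det(1 - √(w_s) K^sin √(w_s)) holds, where J = [-s/(2π), s/(2π)] and w_s(r) = w(πr/s). -/
open MeasureTheory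

set_option maxHeartbeats 2000000

/-- The Fredholm determinant `det(1 - K)` of an integral operator with kernel `K`,
defined via the Fredholm series
`∑_n (-1)ⁿ/n! ∫_{ℝⁿ} det(K(xᵢ,xⱼ)) dx`. -/
noncomputable def fredholmDet (K : ℝ → ℝ → ℂ) : ℂ :=
  ∑' n : ℕ, ((-1 : ℂ) ^ n / (n.factorial : ℂ)) *
    ∫ x : Fin n → ℝ, (Matrix.of fun i j => K (x i) (x j)).det

/-- The sine kernel, defined on the diagonal by continuity. -/
noncomputable def sineKernel (x y : ℝ) : ℂ :=
  if x = y then 1 else ((Real.sin (Real.pi * (x - y)) / (Real.pi * (x - y)) : ℝ) : ℂ)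

namespace FredholmAux

open Complex Real Finset

noncomputable def chi (s : ℝ) : ℝ → ℂ :=
  (Set.Icc (-(s / (2 * Real.pi))) (s / (2 * Real.pi))).indicator fun _ => (1 : ℂ)

lemma chi_mul_self (s t : ℝ) : chi s t * chi s t = chi s t := by
  unfold chi
  by_cases h : t ∈ Set.Icc (-(s / (2 * Real.pi))) (s / (2 * Real.pi)) <;>
    simp [Set.indicator_apply, h]

lemma norm_chi_le (s t : ℝ) : ‖chi s t‖ ≤ 1 := by
  unfold chi
  by_cases h : t ∈ Set.Icc (-(s / (2 * Real.pi))) (s / (2 * Real.pi)) <;>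
    simp [Set.indicator_apply, h]

lemma measurable_chi (s : ℝ) : Measurable (chi s) :=
  (measurable_const.indicator measurableSet_Icc)

lemma integrable_chi (s : ℝ) : Integrable (chi s) := by
  unfold chi
  rw [integrable_indicator_iff measurableSet_Icc]
  exact integrableOn_const measure_Icc_lt_top.ne

lemma sineKernel_symm (x y : ℝ) : sineKernel x y = sineKernel y x := by
  unfold sineKernel
  rcases eq_or_ne x y with h | h
  · simp [h]
  · rw [if_neg h, if_neg (Ne.symm h)]
    have : Real.pi * (y - x) = -(Real.pi * (x - y)) := by ring
    rw [this, Real.sin_neg, neg_div_neg_eq]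

lemma sineKernel_sub (x y : ℝ) : sineKernel x y = sineKernel (x - y) 0 := by
  unfold sineKernel
  rcases eq_or_ne x y with h | h
  · simp [h, sub_eq_zero.2 h]
  · rw [if_neg h, if_neg (by simpa [sub_eq_zero] using h)]
    norm_num

lemma norm_sineKernel_le (x y : ℝ) : ‖sineKernel x y‖ ≤ 1 := by
  unfold sineKernel
  rcases eq_or_ne x y with h | h
  · simp [h]
  · rw [if_neg h]
    rw [Complex.norm_real, Real.norm_eq_abs, abs_div]
    have hne : Real.pi * (x - y) ≠ 0 :=
      mul_ne_zero Real.pi_ne_zero (sub_ne_zero.2 h)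
    rw [div_le_one (abs_pos.2 hne)]
    exact Real.abs_sin_le_abs

lemma measurable_sineKernel : Measurable fun p : ℝ × ℝ => sineKernel p.1 p.2 := by
  unfold sineKernel
  refine Measurable.ite (measurableSet_eq_fun measurable_fst measurable_snd) measurable_const ?_
  exact Complex.measurable_ofReal.comp
    (((continuous_const.mul (continuous_fst.sub continuous_snd)).measurable.sin).div
      ((continuous_const.mul (continuous_fst.sub continuous_snd)).measurable))

/-- The basic 1-D computation: integral of `exp(2πi c t)` over `J` is a sinc value. -/
lemma sinc_integral {s : ℝ} (hs : 0 < s) (c : ℝ) :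
    (∫ t : ℝ, chi s t * Complex.exp (2 * (Real.pi : ℂ) * Complex.I * (c : ℂ) * (t : ℂ))) =
      ((s / Real.pi : ℝ) : ℂ) * sineKernel (s * c / Real.pi) 0 := by
  have hπ : (0:ℝ) < Real.pi := Real.pi_pos
  set L : ℝ := s / (2 * Real.pi) with hL
  have hL0 : 0 < L := by positivity
  have h1 : ∀ t : ℝ, chi s t * Complex.exp (2 * (Real.pi:ℂ) * Complex.I * (c:ℂ) * (t:ℂ))
      = (Set.Icc (-L) L).indicator
          (fun t : ℝ => Complex.exp (2 * (Real.pi:ℂ) * Complex.I * (c:ℂ) * (t:ℂ))) t := by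
    intro t
    unfold chi
    by_cases h : t ∈ Set.Icc (-L) L <;> simp [Set.indicator_apply, h, ← hL]
  simp_rw [h1]
  rw [integral_indicator measurableSet_Icc, integral_Icc_eq_integral_Ioc,
      ← intervalIntegral.integral_of_le (by linarith : -L ≤ L)]
  by_cases hc : c = 0
  · subst hc
    simp only [Complex.ofReal_zero, mul_zero, zero_mul, Complex.exp_zero,
      intervalIntegral.integral_const, sub_neg_eq_add, smul_eq_mul, mul_one]
    rw [zero_div, sineKernel, if_pos rfl, mul_one]
    rw [hL, Complex.real_smul]; push_cast; field_simp; ring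
  · have hk : 2 * (Real.pi:ℂ) * Complex.I * (c:ℂ) ≠ 0 :=
      mul_ne_zero (mul_ne_zero (mul_ne_zero two_ne_zero
        (Complex.ofReal_ne_zero.2 Real.pi_ne_zero)) Complex.I_ne_zero)
        (Complex.ofReal_ne_zero.2 hc)
    rw [integral_exp_mul_complex hk]
    have hz : ((s * c : ℝ) : ℂ) ≠ 0 :=
      Complex.ofReal_ne_zero.2 (mul_ne_zero hs.ne' hc)
    have hπc : (Real.pi : ℂ) ≠ 0 := Complex.ofReal_ne_zero.2 Real.pi_ne_zero
    have e1 : 2 * (Real.pi:ℂ) * Complex.I * (c:ℂ) * ((L:ℝ):ℂ)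
        = ((s * c : ℝ):ℂ) * Complex.I := by
      rw [hL]; push_cast; field_simp
    have e2 : 2 * (Real.pi:ℂ) * Complex.I * (c:ℂ) * (((-L):ℝ):ℂ)
        = -(((s * c : ℝ):ℂ) * Complex.I) := by
      rw [hL]; push_cast; field_simp
    rw [e1, e2]
    have hne : ¬ (s * c / Real.pi = (0:ℝ)) := by
      simp [div_eq_zero_iff, Real.pi_ne_zero, mul_ne_zero hs.ne' hc]
    rw [sineKernel, if_neg hne]
    have h2 : Real.pi * (s * c / Real.pi - 0) = s * c := by field_simp; ring
    rw [h2]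
    have key : Complex.exp (((s*c:ℝ):ℂ) * Complex.I) - Complex.exp (-(((s*c:ℝ):ℂ) * Complex.I))
        = 2 * Complex.sin ((s*c:ℝ):ℂ) * Complex.I := by
      rw [Complex.exp_mul_I, show -(((s*c:ℝ):ℂ) * Complex.I) = (-((s*c:ℝ):ℂ)) * Complex.I by ring,
        Complex.exp_mul_I, Complex.cos_neg, Complex.sin_neg]
      ring
    rw [key]
    rw [show ((Real.sin (s*c) / (s*c) : ℝ) : ℂ) = Complex.sin ((s*c:ℝ):ℂ) / ((s*c:ℝ):ℂ) by
      push_cast [Complex.ofReal_sin]; ring]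
    have hcc : (c : ℂ) ≠ 0 := Complex.ofReal_ne_zero.2 hc
    have hsc : (s : ℂ) ≠ 0 := Complex.ofReal_ne_zero.2 hs.ne'
    push_cast
    field_simp

/-- The canonical middle expression both sides are reduced to. -/
noncomputable def midSum (w : ℝ → ℂ) (s : ℝ) (n : ℕ) : ℂ :=
  ∑ σ : Equiv.Perm (Fin n), (((Equiv.Perm.sign σ : ℤ)) : ℂ) *
    ∫ r : Fin n → ℝ, (∏ i, sineKernel (r (σ i)) (r i)) * ∏ i, w (Real.pi * r i / s)

lemma integrable_ws {w : ℝ → ℂ} (hw : Integrable w) {s : ℝ} (hs : 0 < s) :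
    Integrable fun r : ℝ => w (Real.pi * r / s) := by
  have h := hw.comp_mul_left' (R := Real.pi / s)
    (by positivity : Real.pi / s ≠ 0)
  simpa [div_mul_eq_mul_div] using h

lemma integrable_SW {w : ℝ → ℂ} {s : ℝ} {n : ℕ}
    (hws : Integrable fun r : ℝ => w (Real.pi * r / s)) (σ : Equiv.Perm (Fin n)) :
    Integrable fun u : Fin n → ℝ =>
      (∏ i, sineKernel (u (σ i)) (u i)) * ∏ i, w (Real.pi * u i / s) := by
  have hg : Integrable fun u : Fin n → ℝ => ∏ i, w (Real.pi * u i / s) :=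
    Integrable.fintype_prod (fun _ => hws)
  refine Integrable.bdd_mul (c := 1) hg ?_ (Filter.Eventually.of_forall fun u => ?_)
  · have h1 : ∀ i : Fin n, Measurable fun u : Fin n → ℝ => sineKernel (u (σ i)) (u i) :=
      fun i => by
        have := measurable_sineKernel.comp (f := fun a : Fin n → ℝ => (a (σ i), a i))
          ((measurable_pi_apply (σ i)).prodMk (measurable_pi_apply i))
        exact this
    exact (Finset.measurable_prod _ fun i _ => h1 i).aestronglyMeasurable
  · rw [norm_prod]
    exact Finset.prod_le_one (fun i _ => norm_nonneg _)
      (fun i _ => norm_sineKernel_le _ _)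

lemma rhs_eq {w : ℝ → ℂ} (hw : Integrable w) {s : ℝ} (hs : 0 < s)
    (sq : ℝ → ℂ) (hsqm : Measurable sq)
    (hsq : ∀ r, sq r ^ 2 = w (Real.pi * r / s)) (n : ℕ) :
    (∫ u : Fin n → ℝ,
        (Matrix.of fun i j => sq (u i) * sineKernel (u i) (u j) * sq (u j)).det) =
      midSum w s n := by
  have hws : Integrable fun r : ℝ => w (Real.pi * r / s) := integrable_ws hw hs
  have hpt : ∀ u : Fin n → ℝ,
      (Matrix.of fun i j => sq (u i) * sineKernel (u i) (u j) * sq (u j)).det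
      = ∑ σ : Equiv.Perm (Fin n), (((Equiv.Perm.sign σ : ℤ)) : ℂ) *
          ((∏ i, sineKernel (u (σ i)) (u i)) * ∏ i, w (Real.pi * u i / s)) := by
    intro u
    rw [Matrix.det_apply]
    refine Finset.sum_congr rfl fun σ _ => ?_
    rw [Units.smul_def, zsmul_eq_mul]
    congr 1
    simp only [Matrix.of_apply]
    rw [Finset.prod_mul_distrib, Finset.prod_mul_distrib,
      Equiv.prod_comp σ fun i => sq (u i), mul_right_comm, ← Finset.prod_mul_distrib]
    have hA : (∏ i, sq (u i) * sq (u i)) = ∏ i : Fin n, w (Real.pi * u i / s) :=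
      Finset.prod_congr rfl fun i _ => by rw [← hsq (u i)]; ring
    rw [hA]
    exact mul_comm _ _
  simp_rw [hpt]
  rw [integral_finset_sum _ fun σ _ => ((integrable_SW hws σ).const_mul _)]
  exact Finset.sum_congr rfl fun σ _ => integral_const_mul _ _

noncomputable def Fker (w : ℝ → ℂ) (s : ℝ) {n : ℕ} (σ : Equiv.Perm (Fin n))
    (x u : Fin n → ℝ) : ℂ :=
  (∏ i, chi s (x i)) *
    ∏ i, (Complex.exp (2 * (Real.pi:ℂ) * Complex.I *
      ((x (σ i) : ℂ) - (x i : ℂ)) * (u i : ℂ)) * w (u i))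

lemma Fker_integral (w : ℝ → ℂ) (s : ℝ) {n : ℕ} (σ : Equiv.Perm (Fin n)) (x : Fin n → ℝ) :
    (∫ u : Fin n → ℝ, Fker w s σ x u) = (∏ i, chi s (x i)) *
      ∏ i, ∫ u : ℝ, Complex.exp (2 * (Real.pi:ℂ) * Complex.I *
        ((x (σ i) : ℂ) - (x i : ℂ)) * (u : ℂ)) * w u := by
  unfold Fker
  rw [integral_const_mul,
    MeasureTheory.integral_fintype_prod_volume_eq_prod (ι := Fin n)
      (f := fun i (t : ℝ) => Complex.exp (2 * (Real.pi:ℂ) * Complex.I *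
        ((x (σ i) : ℂ) - (x i : ℂ)) * (t : ℂ)) * w t)]

lemma Fker_integrable {w : ℝ → ℂ} (hw : Integrable w) (s : ℝ) {n : ℕ}
    (σ : Equiv.Perm (Fin n)) :
    Integrable (Function.uncurry (Fker w s σ))
      ((volume : Measure (Fin n → ℝ)).prod (volume : Measure (Fin n → ℝ))) := by
  have hE : Function.uncurry (Fker w s σ) = fun p : (Fin n → ℝ) × (Fin n → ℝ) =>
      (∏ i, Complex.exp (2 * (Real.pi:ℂ) * Complex.I *
          ((p.1 (σ i) : ℂ) - (p.1 i : ℂ)) * (p.2 i : ℂ))) *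
        ((∏ i, chi s (p.1 i)) * (∏ i, w (p.2 i))) := by
    funext p
    simp only [Function.uncurry, Fker, Finset.prod_mul_distrib]
    ring
  rw [hE]
  refine Integrable.bdd_mul (c := 1) ?_ ?_ (Filter.Eventually.of_forall fun p => ?_)
  · exact (Integrable.fintype_prod fun _ => integrable_chi s).mul_prod
      (Integrable.fintype_prod fun _ => hw)
  · refine Continuous.aestronglyMeasurable ?_
    refine continuous_finset_prod _ fun i _ => ?_
    exact Complex.continuous_exp.comp
      (((continuous_const.mul
          ((Complex.continuous_ofReal.comp ((continuous_apply (σ i)).comp continuous_fst)).sub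
            (Complex.continuous_ofReal.comp ((continuous_apply i).comp continuous_fst)))).mul
        (Complex.continuous_ofReal.comp ((continuous_apply i).comp continuous_snd))))
  · rw [norm_prod]
    refine Finset.prod_le_one (fun i _ => norm_nonneg _) (fun i _ => ?_)
    rw [show 2 * (Real.pi:ℂ) * Complex.I * ((p.1 (σ i) : ℂ) - (p.1 i : ℂ)) * (p.2 i : ℂ)
        = ((2 * Real.pi * (p.1 (σ i) - p.1 i) * p.2 i : ℝ) : ℂ) * Complex.I by
      push_cast; ring]
    rw [Complex.norm_exp]
    simp

lemma Fker_inner (w : ℝ → ℂ) {s : ℝ} (hs : 0 < s) {n : ℕ}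
    (σ : Equiv.Perm (Fin n)) (u : Fin n → ℝ) :
    (∫ x : Fin n → ℝ, Fker w s σ x u) =
      (∏ i, ((s / Real.pi : ℝ) : ℂ) *
          sineKernel (s * (u (σ⁻¹ i) - u i) / Real.pi) 0) * ∏ i, w (u i) := by
  have hx : ∀ x : Fin n → ℝ, Fker w s σ x u =
      (∏ i, (chi s (x i) * Complex.exp (2 * (Real.pi:ℂ) * Complex.I *
        ((u (σ⁻¹ i) - u i : ℝ) : ℂ) * (x i : ℂ)))) * ∏ i, w (u i) := by
    intro x
    have h2 : (∏ i, Complex.exp (2 * (Real.pi:ℂ) * Complex.I *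
          ((x (σ i) : ℂ) - (x i : ℂ)) * (u i : ℂ)))
        = ∏ i, Complex.exp (2 * (Real.pi:ℂ) * Complex.I *
            ((u (σ⁻¹ i) - u i : ℝ) : ℂ) * (x i : ℂ)) := by
      have e1 : ∀ i : Fin n, Complex.exp (2 * (Real.pi:ℂ) * Complex.I *
            ((x (σ i) : ℂ) - (x i : ℂ)) * (u i : ℂ))
          = Complex.exp (2 * (Real.pi:ℂ) * Complex.I * ((u i : ℝ) : ℂ) * ((x (σ i) : ℝ) : ℂ)) *
            Complex.exp (-(2 * (Real.pi:ℂ) * Complex.I * ((u i : ℝ) : ℂ) * ((x i : ℝ) : ℂ))) := by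
        intro i; rw [← Complex.exp_add]; congr 1; push_cast; ring
      rw [Finset.prod_congr rfl fun i _ => e1 i, Finset.prod_mul_distrib]
      have e2 : (∏ i, Complex.exp (2 * (Real.pi:ℂ) * Complex.I *
            ((u i : ℝ) : ℂ) * ((x (σ i) : ℝ) : ℂ)))
          = ∏ i, Complex.exp (2 * (Real.pi:ℂ) * Complex.I *
              ((u (σ⁻¹ i) : ℝ) : ℂ) * ((x i : ℝ) : ℂ)) := by
        rw [← Equiv.prod_comp σ (fun i => Complex.exp (2 * (Real.pi:ℂ) * Complex.I *
          ((u (σ⁻¹ i) : ℝ) : ℂ) * ((x i : ℝ) : ℂ)))]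
        exact Finset.prod_congr rfl fun i _ => by rw [← Equiv.Perm.mul_apply, inv_mul_cancel, Equiv.Perm.one_apply]
      rw [e2, ← Finset.prod_mul_distrib]
      exact Finset.prod_congr rfl fun i _ => by
        rw [← Complex.exp_add]; congr 1; push_cast; ring
    unfold Fker
    rw [Finset.prod_mul_distrib, ← mul_assoc, h2, ← Finset.prod_mul_distrib]
  simp_rw [hx]
  rw [integral_mul_const]
  congr 1
  rw [MeasureTheory.integral_fintype_prod_volume_eq_prod (ι := Fin n)
    (f := fun i (t : ℝ) => chi s t * Complex.exp (2 * (Real.pi:ℂ) * Complex.I *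
      ((u (σ⁻¹ i) - u i : ℝ) : ℂ) * (t : ℂ)))]
  exact Finset.prod_congr rfl fun i _ => sinc_integral hs (u (σ⁻¹ i) - u i)

lemma cov_eq (w : ℝ → ℂ) {s : ℝ} (hs : 0 < s) {n : ℕ} (σ : Equiv.Perm (Fin n)) :
    (∫ u : Fin n → ℝ,
      (∏ i, ((s / Real.pi : ℝ) : ℂ) *
          sineKernel (s * (u (σ⁻¹ i) - u i) / Real.pi) 0) * ∏ i, w (u i)) =
    ∫ r : Fin n → ℝ, (∏ i, sineKernel (r (σ i)) (r i)) * ∏ i, w (Real.pi * r i / s) := by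
  have hπ : (0:ℝ) < Real.pi := Real.pi_pos
  have h1 : ∀ u : Fin n → ℝ,
      (∏ i, ((s / Real.pi : ℝ) : ℂ) *
          sineKernel (s * (u (σ⁻¹ i) - u i) / Real.pi) 0) * ∏ i, w (u i)
      = ((s / Real.pi : ℝ) : ℂ)^n *
          ((∏ i, sineKernel (s * (u (σ⁻¹ i) - u i) / Real.pi) 0) * ∏ i, w (u i)) := by
    intro u
    rw [Finset.prod_mul_distrib, Finset.prod_const, Finset.card_univ, Fintype.card_fin,
      mul_assoc]
  simp_rw [h1]
  rw [integral_const_mul]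
  have hg := Measure.integral_comp_smul (μ := (volume : Measure (Fin n → ℝ)))
    (f := fun u : Fin n → ℝ =>
      (∏ i, sineKernel (s * (u (σ⁻¹ i) - u i) / Real.pi) 0) * ∏ i, w (u i))
    (Real.pi / s)
  rw [Module.finrank_fin_fun ℝ] at hg
  have hpow : ((Real.pi / s) ^ n : ℝ) ≠ 0 := pow_ne_zero _ (by positivity)
  have h2 : (∫ u : Fin n → ℝ,
      (∏ i, sineKernel (s * (u (σ⁻¹ i) - u i) / Real.pi) 0) * ∏ i, w (u i))
      = ((Real.pi / s) ^ n : ℝ) • ∫ x : Fin n → ℝ,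
        (∏ i, sineKernel (s * (((Real.pi / s) • x) (σ⁻¹ i) - ((Real.pi / s) • x) i) / Real.pi) 0) *
          ∏ i, w (((Real.pi / s) • x) i) := by
    rw [hg, abs_of_pos (by positivity), smul_smul,
      mul_inv_cancel₀ hpow, one_smul]
  rw [h2]
  have h3 : ∀ x : Fin n → ℝ,
      (∏ i, sineKernel (s * (((Real.pi / s) • x) (σ⁻¹ i) - ((Real.pi / s) • x) i) / Real.pi) 0) *
          ∏ i, w (((Real.pi / s) • x) i)
      = (∏ i, sineKernel (x (σ i)) (x i)) * ∏ i, w (Real.pi * x i / s) := by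
    intro x
    congr 1
    · have harg : ∀ i : Fin n,
          s * (((Real.pi / s) • x) (σ⁻¹ i) - ((Real.pi / s) • x) i) / Real.pi
            = x (σ⁻¹ i) - x i := by
        intro i
        simp only [Pi.smul_apply, smul_eq_mul]
        field_simp
      rw [Finset.prod_congr rfl fun i _ => by
        rw [harg i, ← sineKernel_sub]]
      rw [← Equiv.prod_comp σ (fun i => sineKernel (x (σ⁻¹ i)) (x i))]
      exact Finset.prod_congr rfl fun i _ => by
        rw [← Equiv.Perm.mul_apply, inv_mul_cancel, Equiv.Perm.one_apply, sineKernel_symm]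
    · refine Finset.prod_congr rfl fun i _ => ?_
      simp only [Pi.smul_apply, smul_eq_mul]
      rw [div_mul_eq_mul_div]
  simp_rw [h3]
  rw [Complex.real_smul, ← mul_assoc, ← Complex.ofReal_pow, ← Complex.ofReal_mul,
    ← mul_pow, div_mul_div_comm]
  rw [show s * Real.pi / (Real.pi * s) = 1 by field_simp]
  simp

lemma lhs_eq {w : ℝ → ℂ} (hw : Integrable w) (hwm : Measurable w) {s : ℝ} (hs : 0 < s)
    (n : ℕ) :
    (∫ x : Fin n → ℝ,
        (Matrix.of fun i j => chi s (x i) *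
          (∫ u : ℝ, Complex.exp (2 * (Real.pi : ℂ) * Complex.I *
              ((x i : ℂ) - (x j : ℂ)) * (u : ℂ)) * w u) * chi s (x j)).det) =
      midSum w s n := by
  have hdet : ∀ x : Fin n → ℝ,
      (Matrix.of fun i j => chi s (x i) *
          (∫ u : ℝ, Complex.exp (2 * (Real.pi : ℂ) * Complex.I *
              ((x i : ℂ) - (x j : ℂ)) * (u : ℂ)) * w u) * chi s (x j)).det
      = ∑ σ : Equiv.Perm (Fin n), (((Equiv.Perm.sign σ : ℤ)) : ℂ) *
          ∫ u : Fin n → ℝ, Fker w s σ x u := by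
    intro x
    rw [Matrix.det_apply]
    refine Finset.sum_congr rfl fun σ _ => ?_
    rw [Units.smul_def, zsmul_eq_mul]
    congr 1
    simp only [Matrix.of_apply]
    rw [Fker_integral w s σ x]
    rw [Finset.prod_mul_distrib, Finset.prod_mul_distrib,
      Equiv.prod_comp σ fun i => chi s (x i), mul_right_comm, ← Finset.prod_mul_distrib]
    have hA : (∏ i, chi s (x i) * chi s (x i)) = ∏ i, chi s (x i) :=
      Finset.prod_congr rfl fun i _ => chi_mul_self s (x i)
    rw [hA]
  calc (∫ x : Fin n → ℝ,
        (Matrix.of fun i j => chi s (x i) *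
          (∫ u : ℝ, Complex.exp (2 * (Real.pi : ℂ) * Complex.I *
              ((x i : ℂ) - (x j : ℂ)) * (u : ℂ)) * w u) * chi s (x j)).det)
      = ∫ x : Fin n → ℝ, ∑ σ : Equiv.Perm (Fin n), (((Equiv.Perm.sign σ : ℤ)) : ℂ) *
          ∫ u : Fin n → ℝ, Fker w s σ x u := by
        exact integral_congr_ae (Filter.Eventually.of_forall hdet)
    _ = ∑ σ : Equiv.Perm (Fin n), (((Equiv.Perm.sign σ : ℤ)) : ℂ) *
          ∫ x : Fin n → ℝ, ∫ u : Fin n → ℝ, Fker w s σ x u := by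
        rw [integral_finset_sum]
        · exact Finset.sum_congr rfl fun σ _ => integral_const_mul _ _
        · exact fun σ _ => ((Fker_integrable hw s σ).integral_prod_left).const_mul _
    _ = ∑ σ : Equiv.Perm (Fin n), (((Equiv.Perm.sign σ : ℤ)) : ℂ) *
          ∫ u : Fin n → ℝ, ∫ x : Fin n → ℝ, Fker w s σ x u := by
        refine Finset.sum_congr rfl fun σ _ => ?_
        rw [integral_integral_swap (Fker_integrable hw s σ)]
    _ = midSum w s n := by
        refine Finset.sum_congr rfl fun σ _ => ?_
        congr 1
        simp_rw [Fker_inner w hs σ]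
        exact cov_eq w hs σ

end FredholmAux

/-- For integrable `w : ℝ → ℂ` and `s > 0`, the Fredholm determinant identity
`det(1 - χ_J K_w χ_J) = det(1 - √(w_s) K^sin √(w_s))` holds, where
`J = [-s/(2π), s/(2π)]`, `w_s(r) = w(πr/s)`, and `√(w_s)` is a fixed measurable square
root of `w_s`. -/
theorem fredholmDet_deformed_eq_conjugated (w : ℝ → ℂ) (hw : Integrable w)
    (s : ℝ) (hs : 0 < s) (sq : ℝ → ℂ) (hsqm : Measurable sq)
    (hsq : ∀ r, sq r ^ 2 = w (Real.pi * r / s)) :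
    fredholmDet (fun x y =>
      Set.indicator (Set.Icc (-(s / (2 * Real.pi))) (s / (2 * Real.pi))) (fun _ => (1 : ℂ)) x *
        (∫ u : ℝ, Complex.exp (2 * (Real.pi : ℂ) * Complex.I * ((x : ℂ) - (y : ℂ)) * (u : ℂ)) * w u) *
        Set.indicator (Set.Icc (-(s / (2 * Real.pi))) (s / (2 * Real.pi))) (fun _ => (1 : ℂ)) y) =
    fredholmDet (fun u v => sq u * sineKernel u v * sq v) := by
  have hwm : Measurable w := by
    have hrepr : w = fun t => sq (s * t / Real.pi) ^ 2 := by
      funext t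
      rw [hsq (s * t / Real.pi)]
      congr 1
      field_simp
    rw [hrepr]
    exact (hsqm.comp ((measurable_id.const_mul s).div_const Real.pi)).pow_const 2
  unfold fredholmDet
  refine tsum_congr fun n => ?_
  congr 1
  exact (FredholmAux.lhs_eq hw hwm hs n).trans
    (FredholmAux.rhs_eq hw hs sq hsqm hsq n).symm
end

section
/- Let f : ℝ → ℂ be C^∞ with all derivatives decaying faster than any polynomial at -∞. Define W(r) = -2∫_0^∞ f'(-u² - r) du. Then W is C^∞ and for all nonnegative integers k, ℓ, r^k W^{(ℓ)}(r) → 0 as r → +∞. -/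
open Filter MeasureTheory Topology Set

section Part1

variable (f : ℝ → ℂ)

noncomputable def Jfun (n : ℕ) (r : ℝ) : ℂ :=
  ∫ u in Set.Ioi (0:ℝ), iteratedDeriv n f (-u^2 - r)

variable {f}

lemma smooth_iter (hf : ContDiff ℝ (⊤:ℕ∞) f) (n : ℕ) :
    ContDiff ℝ (⊤:ℕ∞) (iteratedDeriv n f) := by
  rw [iteratedDeriv_eq_iterate]; exact hf.iterate_deriv n

lemma cont_iter (hf : ContDiff ℝ (⊤:ℕ∞) f) (n : ℕ) : Continuous (iteratedDeriv n f) :=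
  (smooth_iter hf n).continuous

lemma bnd (hf : ContDiff ℝ (⊤:ℕ∞) f)
    (hdecay : ∀ n k : ℕ, Tendsto (fun t : ℝ => t ^ k * iteratedDeriv n f t) atBot (nhds 0))
    (n j : ℕ) (b : ℝ) :
    ∃ C : ℝ, 0 ≤ C ∧ ∀ t ≤ b, ‖iteratedDeriv n f t‖ * (1+|t|)^j ≤ C := by
  have hcont : Continuous fun t : ℝ => ‖iteratedDeriv n f t‖ * (1+|t|)^j :=
    (cont_iter hf n).norm.mul ((continuous_const.add continuous_abs).pow j)
  have h0 : Tendsto (fun t : ℝ => ‖iteratedDeriv n f t‖ * (1+|t|)^j) atBot (nhds 0) := by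
    apply squeeze_zero_norm'
      (a := fun t : ℝ => 2^j * (‖t^j * iteratedDeriv n f t‖ + ‖iteratedDeriv n f t‖))
    · filter_upwards [eventually_le_atBot (-1 : ℝ)] with t ht
      have h1 : (1:ℝ) ≤ |t| := by rw [abs_of_nonpos (by linarith)]; linarith
      have h2 : (1+|t|)^j ≤ 2^j * |t|^j := by
        calc (1+|t|)^j ≤ (2*|t|)^j := pow_le_pow_left₀ (by positivity) (by linarith) j
        _ = 2^j * |t|^j := mul_pow 2 _ j
      have h3 : ‖(t:ℝ)^j * iteratedDeriv n f t‖ = |t|^j * ‖iteratedDeriv n f t‖ := by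
        rw [show ((t:ℝ)^j * iteratedDeriv n f t) = ((t^j : ℝ):ℂ) * iteratedDeriv n f t by push_cast; ring]
        rw [norm_mul, Complex.norm_real, Real.norm_eq_abs, abs_pow]
      rw [Real.norm_eq_abs, abs_of_nonneg (by positivity)]
      calc ‖iteratedDeriv n f t‖ * (1+|t|)^j
          ≤ ‖iteratedDeriv n f t‖ * (2^j * |t|^j) :=
            mul_le_mul_of_nonneg_left h2 (norm_nonneg _)
        _ = 2^j * (|t|^j * ‖iteratedDeriv n f t‖) := by ring
        _ = 2^j * ‖t^j * iteratedDeriv n f t‖ := by rw [h3]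
        _ ≤ 2^j * (‖t^j * iteratedDeriv n f t‖ + ‖iteratedDeriv n f t‖) := by
            have h5 := norm_nonneg (iteratedDeriv n f t)
            have h6 : (0:ℝ) ≤ 2^j := by positivity
            nlinarith
    · have h4 : Tendsto (fun t : ℝ => ‖t^j * iteratedDeriv n f t‖ + ‖iteratedDeriv n f t‖) atBot (nhds 0) := by
        simpa using (hdecay n j).norm.add ((by simpa using hdecay n 0 : Tendsto (fun t : ℝ => iteratedDeriv n f t) atBot (nhds 0)).norm)
      simpa using h4.const_mul ((2:ℝ)^j)
  have h1 : ∀ᶠ t in atBot, ‖iteratedDeriv n f t‖ * (1+|t|)^j < 1 :=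
    h0.eventually_lt_const one_pos
  obtain ⟨T, hT⟩ := eventually_atBot.1 h1
  obtain ⟨C, hCb⟩ := (isCompact_Icc (a := T) (b := b)).exists_bound_of_continuousOn hcont.continuousOn
  refine ⟨max 1 (max C 0), le_trans zero_le_one (le_max_left _ _), fun t htb => ?_⟩
  rcases le_or_gt t T with h | h
  · exact le_trans (le_of_lt (hT t h)) (le_max_left _ _)
  · have := hCb t ⟨le_of_lt h, htb⟩
    rw [Real.norm_eq_abs] at this
    exact le_trans (le_trans (le_abs_self _) this)
      (le_trans (le_max_left C 0) (le_max_right _ _))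


lemma dom (hf : ContDiff ℝ (⊤:ℕ∞) f)
    (hdecay : ∀ n k : ℕ, Tendsto (fun t : ℝ => t ^ k * iteratedDeriv n f t) atBot (nhds 0))
    (n : ℕ) (a : ℝ) :
    ∃ B : ℝ → ℝ, Integrable B (volume.restrict (Set.Ioi (0:ℝ))) ∧ (∀ u, 0 ≤ B u) ∧
      ∀ u x : ℝ, a ≤ x → ‖iteratedDeriv n f (-u^2 - x)‖ ≤ B u := by
  obtain ⟨C, hC0, hC⟩ := bnd hf hdecay n 1 (-a)
  refine ⟨fun u => (C*(2+2*|a|)) * (1+u^2)⁻¹, ?_, ?_, ?_⟩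
  · exact (integrable_inv_one_add_sq.restrict).const_mul _
  · intro u; positivity
  · intro u x hx
    set t := -u^2 - x with hts
    have ht : t ≤ -a := by nlinarith [sq_nonneg u]
    have h1 := hC _ ht
    rw [pow_one] at h1
    have h2 : u^2 + a ≤ |t| := by
      rcases le_or_gt 0 (u^2 + x) with h | h
      · rw [abs_of_nonpos (by simp only [hts]; linarith)]; simp only [hts]; linarith
      · calc u^2 + a ≤ u^2 + x := by linarith
          _ ≤ 0 := le_of_lt h
          _ ≤ _ := abs_nonneg _
    have h3 : (0:ℝ) ≤ |t| := abs_nonneg _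
    have h4 := le_abs_self a
    have h5 := neg_abs_le a
    have h6 := abs_nonneg a
    have habs : (1 + u^2) ≤ (1 + |t|) * (2 + 2*|a|) := by nlinarith
    have hpos : (0:ℝ) < 1 + |t| := by positivity
    have hpos2 : (0:ℝ) < 1 + u^2 := by positivity
    have hF : ‖iteratedDeriv n f t‖ ≤ C / (1 + |t|) := by
      rw [le_div_iff₀ hpos]; exact h1
    refine le_trans hF ?_
    show C / (1 + |t|) ≤ C * (2 + 2 * |a|) * (1 + u ^ 2)⁻¹
    rw [← div_eq_mul_inv, div_le_div_iff₀ hpos hpos2]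
    nlinarith [mul_le_mul_of_nonneg_left habs hC0]

lemma cont_integrand (hf : ContDiff ℝ (⊤:ℕ∞) f) (n : ℕ) (x : ℝ) :
    Continuous (fun u : ℝ => iteratedDeriv n f (-u^2 - x)) := by
  exact (cont_iter hf n).comp (((continuous_pow 2).neg).sub continuous_const)

lemma integ (hf : ContDiff ℝ (⊤:ℕ∞) f)
    (hdecay : ∀ n k : ℕ, Tendsto (fun t : ℝ => t ^ k * iteratedDeriv n f t) atBot (nhds 0))
    (n : ℕ) (x : ℝ) :
    Integrable (fun u : ℝ => iteratedDeriv n f (-u^2 - x)) (volume.restrict (Set.Ioi (0:ℝ))) := by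
  obtain ⟨B, hBint, hB0, hB⟩ := dom hf hdecay n x
  refine Integrable.mono' hBint (cont_integrand hf n x).aestronglyMeasurable ?_
  filter_upwards with u
  exact hB u x le_rfl

lemma JhasDeriv (hf : ContDiff ℝ (⊤:ℕ∞) f)
    (hdecay : ∀ n k : ℕ, Tendsto (fun t : ℝ => t ^ k * iteratedDeriv n f t) atBot (nhds 0))
    (n : ℕ) (x₀ : ℝ) :
    HasDerivAt (Jfun f n) (-(Jfun f (n+1) x₀)) x₀ := by
  obtain ⟨B, hBint, hB0, hB⟩ := dom hf hdecay (n+1) (x₀ - 1)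
  have key := hasDerivAt_integral_of_dominated_loc_of_deriv_le (μ := volume.restrict (Set.Ioi (0:ℝ)))
    (F := fun (x : ℝ) (u : ℝ) => iteratedDeriv n f (-u^2 - x))
    (F' := fun (x : ℝ) (u : ℝ) => -iteratedDeriv (n+1) f (-u^2 - x))
    (x₀ := x₀) (s := Metric.ball x₀ 1) (bound := B) (Metric.ball_mem_nhds x₀ one_pos)
    (Eventually.of_forall fun x => (cont_integrand hf n x).aestronglyMeasurable)
    (integ hf hdecay n x₀)
    ((cont_integrand hf (n+1) x₀).neg.aestronglyMeasurable)
    ?_ hBint ?_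
  · have h2 := key.2
    rw [integral_neg] at h2
    exact h2
  · filter_upwards with u
    intro x hx
    rw [norm_neg]
    apply hB
    have := abs_lt.1 (by simpa [Real.dist_eq] using Metric.mem_ball.1 hx)
    linarith [this.2]
  · filter_upwards with u
    intro x hx
    have h1 : HasDerivAt (fun x : ℝ => -u^2 - x) (-1) x := by
      simpa [sub_eq_add_neg] using ((hasDerivAt_id x).neg.const_add (-u^2 : ℝ))
    have h2 : HasDerivAt (iteratedDeriv n f) (iteratedDeriv (n+1) f (-u^2-x)) (-u^2-x) := by
      rw [iteratedDeriv_succ]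
      exact (((smooth_iter hf n).differentiable (by simp)) _).hasDerivAt
    have h3 := h2.scomp x h1
    simpa [Function.comp_def] using h3

lemma iterD_W (hf : ContDiff ℝ (⊤:ℕ∞) f)
    (hdecay : ∀ n k : ℕ, Tendsto (fun t : ℝ => t ^ k * iteratedDeriv n f t) atBot (nhds 0))
    (l : ℕ) :
    iteratedDeriv l (fun r => (-2:ℂ) * Jfun f 1 r)
      = fun r => (-2:ℂ) * (-1:ℂ)^l * Jfun f (1+l) r := by
  induction l with
  | zero => simp
  | succ l ih =>
    rw [iteratedDeriv_succ, ih]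
    funext r
    have hd := JhasDeriv hf hdecay (1+l) r
    have h1 : HasDerivAt (fun r => (-2:ℂ)*(-1:ℂ)^l * Jfun f (1+l) r)
        (((-2:ℂ)*(-1:ℂ)^l) * -(Jfun f (1+l+1) r)) r := hd.const_mul _
    rw [h1.deriv, pow_succ]
    ring_nf

lemma decayJ (hf : ContDiff ℝ (⊤:ℕ∞) f)
    (hdecay : ∀ n k : ℕ, Tendsto (fun t : ℝ => t ^ k * iteratedDeriv n f t) atBot (nhds 0))
    (k l : ℕ) :
    Tendsto (fun r : ℝ => (r:ℂ)^k * ((-2:ℂ) * (-1:ℂ)^l * Jfun f (1+l) r)) atTop (nhds 0) := by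
  obtain ⟨C, hC0, hC⟩ := bnd hf hdecay (1+l) (k+2) 0
  set K := ∫ u in Set.Ioi (0:ℝ), (1+u^2)⁻¹ with hK
  have hK0 : 0 ≤ K := integral_nonneg (fun u => by positivity)
  apply squeeze_zero_norm' (a := fun r : ℝ => (2*C*K) * r⁻¹)
  · filter_upwards [eventually_ge_atTop (1:ℝ)] with r hr
    have hrpos : (0:ℝ) < r := by linarith
    have hJ : ‖Jfun f (1+l) r‖ ≤ C / (1+r)^(k+1) * K := by
      have hb : ∀ u : ℝ, ‖iteratedDeriv (1+l) f (-u^2 - r)‖ ≤ C / (1+r)^(k+1) * (1+u^2)⁻¹ := by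
        intro u
        have ht : -u^2 - r ≤ 0 := by nlinarith [sq_nonneg u]
        have h1 := hC _ ht
        have habs : |(-u^2 - r)| = u^2 + r := by rw [abs_of_nonpos ht]; ring
        rw [habs] at h1
        have hkey : (1+r)^(k+1) * (1+u^2) ≤ (1+(u^2+r))^(k+2) := by
          have e1 : (1+r) ≤ (1+(u^2+r)) := by nlinarith [sq_nonneg u]
          have e2 : (1+u^2) ≤ (1+(u^2+r)) := by linarith
          calc (1+r)^(k+1) * (1+u^2) ≤ (1+(u^2+r))^(k+1) * (1+(u^2+r)) :=
                mul_le_mul (pow_le_pow_left₀ (by linarith) e1 _) e2 (by positivity) (by positivity)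
            _ = (1+(u^2+r))^(k+2) := by rw [← pow_succ]
        have hp1 : (0:ℝ) < (1+(u^2+r))^(k+2) := by positivity
        have hp2 : (0:ℝ) < (1+r)^(k+1) := by positivity
        have hp3 : (0:ℝ) < 1+u^2 := by positivity
        have hF : ‖iteratedDeriv (1+l) f (-u^2-r)‖ ≤ C / (1+(u^2+r))^(k+2) := by
          rw [le_div_iff₀ hp1]
          exact h1
        refine le_trans hF ?_
        have h9 : (((1+(u^2+r))^(k+2) : ℝ))⁻¹ ≤ ((1+r)^(k+1) * (1+u^2))⁻¹ :=
          inv_anti₀ (by positivity) hkey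
        calc C / (1+(u^2+r))^(k+2) = C * ((1+(u^2+r))^(k+2))⁻¹ := by rw [div_eq_mul_inv]
          _ ≤ C * ((1+r)^(k+1) * (1+u^2))⁻¹ := mul_le_mul_of_nonneg_left h9 hC0
          _ = C/(1+r)^(k+1) * (1+u^2)⁻¹ := by rw [mul_inv, div_eq_mul_inv]; ring
      calc ‖Jfun f (1+l) r‖
          = ‖∫ u in Set.Ioi (0:ℝ), iteratedDeriv (1+l) f (-u^2 - r)‖ := rfl
        _ ≤ ∫ u in Set.Ioi (0:ℝ), C/(1+r)^(k+1) * (1+u^2)⁻¹ :=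
            norm_integral_le_of_norm_le ((integrable_inv_one_add_sq.restrict).const_mul _)
              (Eventually.of_forall hb)
        _ = C/(1+r)^(k+1) * K := by
            rw [hK]
            simp_rw [← smul_eq_mul (a := C/(1+r)^(k+1))]
            rw [integral_smul, smul_eq_mul]
    have hnorm : ‖(r:ℂ)^k * ((-2:ℂ)*(-1:ℂ)^l * Jfun f (1+l) r)‖
        = r^k * (2 * ‖Jfun f (1+l) r‖) := by
      rw [norm_mul, norm_mul, norm_mul, norm_pow, norm_pow]
      simp only [Complex.norm_real, Real.norm_eq_abs, abs_of_nonneg (le_of_lt hrpos)]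
      simp [abs_of_nonneg (le_of_lt hrpos)]
    rw [hnorm]
    have h3 : r^(k+1) ≤ (1+r)^(k+1) := pow_le_pow_left₀ (by linarith) (by linarith) _
    have hq : r^k / (1+r)^(k+1) ≤ r⁻¹ := by
      rw [div_le_iff₀ (by positivity)]
      calc r^k = r⁻¹ * r^(k+1) := by
            rw [pow_succ]
            field_simp
        _ ≤ r⁻¹ * (1+r)^(k+1) := by
            exact mul_le_mul_of_nonneg_left h3 (by positivity)
    calc r^k * (2 * ‖Jfun f (1+l) r‖) ≤ r^k * (2 * (C/(1+r)^(k+1) * K)) := by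
          have := mul_le_mul_of_nonneg_left hJ (by norm_num : (0:ℝ) ≤ 2)
          exact mul_le_mul_of_nonneg_left this (by positivity)
      _ = (2*C*K) * (r^k / (1+r)^(k+1)) := by ring
      _ ≤ (2*C*K) * r⁻¹ := mul_le_mul_of_nonneg_left hq (by positivity)
  · simpa using tendsto_inv_atTop_zero.const_mul (2*C*K)

section PartA

open Complex

variable {f : ℝ → ℂ}

open Filter

/-- Let `f : ℝ → ℂ` be `C^∞` with all derivatives decaying faster than any polynomial
at `-∞`, and define `W(r) = -2∫_0^∞ f'(-u² - r) du`. Then `W` is `C^∞` and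
`r^k W^{(ℓ)}(r) → 0` as `r → +∞` for all `k, ℓ`. -/
theorem scattering_weight_smooth_rapid_decay (f : ℝ → ℂ) (hf : ContDiff ℝ (⊤ : ℕ∞) f)
    (hdecay : ∀ n k : ℕ,
      Tendsto (fun t : ℝ => t ^ k * iteratedDeriv n f t) atBot (nhds 0)) :
    ContDiff ℝ (⊤ : ℕ∞) (fun r : ℝ => -2 * ∫ u in Set.Ioi (0 : ℝ), deriv f (-u ^ 2 - r)) ∧
    ∀ k l : ℕ,
      Tendsto (fun r : ℝ =>
          (r : ℂ) ^ k *
            iteratedDeriv l (fun r' : ℝ => -2 * ∫ u in Set.Ioi (0 : ℝ), deriv f (-u ^ 2 - r')) r)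
        atTop (nhds 0) := by
  have hfinf : ContDiff ℝ (⊤:ℕ∞) f := hf.of_le (by simp)
  have hW_eq : (fun r : ℝ => -2 * ∫ u in Set.Ioi (0 : ℝ), deriv f (-u ^ 2 - r))
      = fun r : ℝ => (-2:ℂ) * Jfun f 1 r := by
    funext r
    simp only [Jfun, iteratedDeriv_one]
  constructor
  · rw [hW_eq]
    refine contDiff_of_differentiable_iteratedDeriv (fun m _ => ?_)
    rw [iterD_W hfinf hdecay m]
    exact fun x => ((JhasDeriv hfinf hdecay (1+m) x).differentiableAt).const_mul _
  · intro k l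
    have h := decayJ hfinf hdecay k l
    rw [hW_eq, iterD_W hfinf hdecay l]
    exact h
end PartA
end Part1
end
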